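/- arXiv:math/0311307 — 3 statements merged into one kernel-verified Lean document; each statement's English description precedes it below -/
import Mathlib

section
/- Suppose f : ℝ → ℂ is a nonzero solution of -f'' + V·f = E·f, where V is 1-periodic and even (V(-x)=V(x)), f satisfies f(x) = (-1)^{n+1} f(-x) for all x, and there is a constant C ≠ 0 with f(x+1) = C·f(x) for all x. Then C ∈ {1, -1}, and consequently f(x+2) = f(x) for all x. -/
/-- If a nonzero solution `f` of `-f'' + V·f = E·f` (with `V` `1`-periodic and even)
satisfies `f(x) = (-1)^(n+1)·f(-x)` and `f(x+1) = C·f(x)` with `C ≠ 0`, then `C = ±1`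
and hence `f` is `2`-periodic. -/
theorem multiplier_pm_one (n : ℕ) (hn : 1 ≤ n) (V : ℝ → ℂ) (E C : ℂ) (f : ℝ → ℂ)
    (hVper : ∀ x, V (x + 1) = V x) (hVeven : ∀ x, V (-x) = V x)
    (hf : Differentiable ℝ f) (hf' : Differentiable ℝ (deriv f))
    (hfeq : ∀ x, -(deriv (deriv f) x) + V x * f x = E * f x)
    (hfne : ∃ x, f x ≠ 0)
    (hsym : ∀ x, f x = (-1) ^ (n + 1) * f (-x))
    (hC : C ≠ 0) (hqper : ∀ x, f (x + 1) = C * f x) :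
    (C = 1 ∨ C = -1) ∧ ∀ x, f (x + 2) = f x := by
  obtain ⟨x₀, hx₀⟩ := hfne
  set ε : ℂ := (-1) ^ (n + 1) with hε
  have hε2 : ε * ε = 1 := by
    rw [hε, ← pow_add, ← two_mul, pow_mul]
    norm_num
  -- key identity: C * f x = f x / C
  have key : ∀ x : ℝ, C * (C * f x) = f x := by
    intro x
    have h1 : f (x + 1) = ε * f (-(x + 1)) := hsym (x + 1)
    have h2 : f (-x) = C * f (-x - 1) := by
      have := hqper (-x - 1); simpa using this
    have h3 : f (-(x + 1)) = f (-x - 1) := by ring_nf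
    have h4 : f x = ε * f (-x) := hsym x
    -- C * f x = f (x+1) = ε * f(-x-1), and f(-x) = ε * f x (since ε² = 1)
    have h5 : ε * f x = f (-x) := by
      rw [h4, ← mul_assoc, hε2, one_mul]
    calc C * (C * f x) = C * f (x + 1) := by rw [hqper x]
      _ = C * (ε * f (-x - 1)) := by rw [h1, h3]
      _ = ε * (C * f (-x - 1)) := by ring
      _ = ε * f (-x) := by rw [h2]
      _ = ε * (ε * f x) := by rw [h5]
      _ = f x := by rw [← mul_assoc, hε2, one_mul]
  have hC2 : C ^ 2 = 1 := by
    have h := key x₀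
    have h2 : (C ^ 2 - 1) * f x₀ = 0 := by linear_combination h
    rcases mul_eq_zero.mp h2 with h3 | h3
    · exact sub_eq_zero.mp h3
    · exact absurd h3 hx₀
  have hfac : (C - 1) * (C + 1) = 0 := by linear_combination hC2
  have hpm : C = 1 ∨ C = -1 := by
    rcases mul_eq_zero.mp hfac with h | h
    · exact Or.inl (sub_eq_zero.mp h)
    · exact Or.inr (eq_neg_of_add_eq_zero_left h)
  refine ⟨hpm, fun x => ?_⟩
  have : f (x + 2) = C * (C * f x) := by
    have := hqper (x + 1)
    rw [show x + 1 + 1 = x + 2 by ring] at this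
    rw [this, hqper x]
  rw [this, key]
end

section
/- For every m ∈ ℕ, the function v_m(x) = C_m^{n+1}(cos(πx)) · (sin(πx))^{n+1}, where C_m^{n+1} is the Gegenbauer polynomial of degree m with parameter n+1, satisfies the differential equation -v_m''(x) + n(n+1)·(π²/sin²(πx))·v_m(x) = π²(m+n+1)²·v_m(x) for all x ∈ (0,1). -/
/-!
With `c = cos θ` and `s = sin θ`, differentiation sends `R(c)·s^(j+1)` to `(T_j R)(c)·s^j`,
where `T_j R = (j+1)·X·R - (1 - X²)·R'` (`sinPowDeriv j`) is a polynomial operator. So the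
second derivative of `P(c)·s^(n+1)` is `(T_{n-1} T_n P)(c)·s^(n-1)`. For `P = C_m^{n+1}` the
Gegenbauer differential equation `(1 - X²)P'' - (2n+3)XP' + m(m+2n+2)P = 0`, a consequence of
the lowering and raising relations, turns `T_{n-1} T_n P` into `n(n+1)P - (m+n+1)²(1 - X²)P`.
The substitution `θ = πx` contributes the factor `π²`.
-/

open Polynomial Real

/-- Gegenbauer polynomials `C_m^ν`, defined by the standard three-term recurrence
`(m+2)·C_{m+2}^ν(x) = 2(m+1+ν)·x·C_{m+1}^ν(x) - (m+2ν)·C_m^ν(x)`,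
with `C_0^ν = 1` and `C_1^ν = 2ν·x`. -/
noncomputable def gegenbauer (ν : ℝ) : ℕ → Polynomial ℝ
  | 0 => 1
  | 1 => Polynomial.C (2 * ν) * Polynomial.X
  | (m + 2) =>
      Polynomial.C (2 * ((m : ℝ) + 1 + ν) / ((m : ℝ) + 2)) * Polynomial.X *
          gegenbauer ν (m + 1)
        - Polynomial.C (((m : ℝ) + 2 * ν) / ((m : ℝ) + 2)) * gegenbauer ν m

theorem deriv_deriv_comp_mul_left {𝕜 E : Type*} [NontriviallyNormedField 𝕜]
    [NormedAddCommGroup E] [NormedSpace 𝕜 E] (c : 𝕜) (f : 𝕜 → E) (x : 𝕜) :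
    deriv (deriv (f <| c * ·)) x = c ^ 2 • deriv (deriv f) (c * x) := by
  have h : deriv (f <| c * ·) = fun y => c • deriv f (c * y) :=
    funext (deriv_comp_mul_left c f)
  rw [h, deriv_fun_const_smul_field, deriv_comp_mul_left, smul_smul, sq]

section Gegenbauer

variable (ν : ℝ)

theorem gegenbauer_recurrence (m : ℕ) :
    C ((m : ℝ) + 2) * gegenbauer ν (m + 2)
      = C (2 * ((m : ℝ) + 1 + ν)) * X * gegenbauer ν (m + 1)
        - C ((m : ℝ) + 2 * ν) * gegenbauer ν m := by
  have hm : (m : ℝ) + 2 ≠ 0 := by positivity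
  rw [gegenbauer, mul_sub, ← mul_assoc, ← mul_assoc, ← mul_assoc, ← C_mul, ← C_mul,
    mul_div_cancel₀ _ hm, mul_div_cancel₀ _ hm]

theorem gegenbauer_succ_and_derivative_succ : ∀ m : ℕ,
    C ((m : ℝ) + 1) * gegenbauer ν (m + 1)
        = C ((m : ℝ) + 2 * ν) * X * gegenbauer ν m
          - (1 - X ^ 2) * derivative (gegenbauer ν m)
      ∧ derivative (gegenbauer ν (m + 1))
        = C ((m : ℝ) + 2 * ν) * gegenbauer ν m + X * derivative (gegenbauer ν m)
  | 0 => by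
    constructor <;> simp [gegenbauer]
  | (m + 1) => by
    obtain ⟨hlower, hraise⟩ := gegenbauer_succ_and_derivative_succ m
    have hrec := gegenbauer_recurrence ν m
    have hrecd := congrArg derivative hrec
    simp only [derivative_mul, derivative_C, derivative_X, zero_mul, zero_add, mul_one,
      derivative_sub] at hrecd
    have hC : (C ((m : ℝ) + 2) : ℝ[X]) ≠ 0 := C_ne_zero.mpr (by positivity)
    push_cast
    constructor
    · simp only [C_add, C_mul, C_1, map_ofNat] at hrec hlower hraise ⊢
      linear_combination hrec + (1 - X ^ 2) * hraise + X * hlower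
    · apply mul_left_cancel₀ hC
      simp only [C_add, C_mul, C_1, map_ofNat] at hrecd hlower hraise ⊢
      linear_combination hrecd + (C (m : ℝ) + 2 * C ν) * (X * hraise - hlower)

theorem gegenbauer_ode (m : ℕ) :
    (1 - X ^ 2) * derivative (derivative (gegenbauer ν m))
      - C (2 * ν + 1) * X * derivative (gegenbauer ν m)
      + C ((m : ℝ) * ((m : ℝ) + 2 * ν)) * gegenbauer ν m = 0 := by
  obtain ⟨hlower, hraise⟩ := gegenbauer_succ_and_derivative_succ ν m
  have hlower' := congrArg derivative hlower
  simp only [derivative_mul, derivative_C, derivative_X, derivative_sub, derivative_one,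
    derivative_pow, zero_mul, zero_add, mul_one, zero_sub, Nat.cast_ofNat] at hlower'
  simp only [C_add, C_mul, C_1, map_ofNat] at hlower' hraise ⊢
  linear_combination hlower' - (C (m : ℝ) + 1) * hraise

end Gegenbauer

noncomputable def sinPowDeriv (j : ℕ) (R : ℝ[X]) : ℝ[X] :=
  C ((j : ℝ) + 1) * X * R - (1 - X ^ 2) * derivative R

theorem hasDerivAt_eval_cos_mul_sin_pow_succ (R : ℝ[X]) (j : ℕ) (θ : ℝ) :
    HasDerivAt (fun t => R.eval (cos t) * sin t ^ (j + 1))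
      ((sinPowDeriv j R).eval (cos θ) * sin θ ^ j) θ := by
  refine (((R.hasDerivAt (cos θ)).comp θ (hasDerivAt_cos θ)).fun_mul
    ((hasDerivAt_sin θ).fun_pow (j + 1))).congr_deriv ?_
  simp only [sinPowDeriv, eval_sub, eval_mul, eval_C, eval_X, eval_pow, eval_one,
    Function.comp_apply, Nat.cast_add, Nat.cast_one, add_tsub_cancel_right]
  linear_combination (-(eval (cos θ) (derivative R)) * sin θ ^ j) * sin_sq_add_cos_sq θ

theorem deriv_deriv_eval_cos_mul_sin_pow (R : ℝ[X]) (j : ℕ) (θ : ℝ) :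
    deriv (deriv fun t => R.eval (cos t) * sin t ^ (j + 2)) θ
      = (sinPowDeriv j (sinPowDeriv (j + 1) R)).eval (cos θ) * sin θ ^ j := by
  have h : deriv (fun t => R.eval (cos t) * sin t ^ (j + 2))
      = fun t => (sinPowDeriv (j + 1) R).eval (cos t) * sin t ^ (j + 1) :=
    funext fun t => (hasDerivAt_eval_cos_mul_sin_pow_succ R (j + 1) t).deriv
  rw [h]
  exact (hasDerivAt_eval_cos_mul_sin_pow_succ _ j θ).deriv

theorem sinPowDeriv_sinPowDeriv_gegenbauer (j m : ℕ) :
    sinPowDeriv j (sinPowDeriv (j + 1) (gegenbauer ((j : ℝ) + 2) m))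
      = C (((j : ℝ) + 1) * ((j : ℝ) + 2)) * gegenbauer ((j : ℝ) + 2) m
        - C (((m : ℝ) + j + 2) ^ 2) * (1 - X ^ 2) * gegenbauer ((j : ℝ) + 2) m := by
  have hode := gegenbauer_ode ((j : ℝ) + 2) m
  simp only [sinPowDeriv, derivative_mul, derivative_sub, derivative_C, derivative_X,
    derivative_one, derivative_X_pow]
  push_cast
  simp only [C_add, C_mul, C_pow, C_1, map_ofNat, map_natCast] at hode ⊢
  linear_combination (1 - X ^ 2) * hode

/-- The functions `v_m(x) = C_m^{n+1}(cos πx)·(sin πx)^{n+1}` are eigenfunctions of the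
Pöschl–Teller Hamiltonian `-d²/dx² + n(n+1)π²/sin²(πx)` with eigenvalue `π²(m+n+1)²`. -/
theorem poschl_teller_eigenfunction (n : ℕ) (hn : 1 ≤ n) (m : ℕ) :
    ∀ x ∈ Set.Ioo (0 : ℝ) 1,
      -(deriv (deriv (fun y : ℝ =>
          (gegenbauer (n + 1) m).eval (Real.cos (π * y)) * (Real.sin (π * y)) ^ (n + 1))) x)
        + (n * (n + 1)) * (π ^ 2 / (Real.sin (π * x)) ^ 2) *
            ((gegenbauer (n + 1) m).eval (Real.cos (π * x)) * (Real.sin (π * x)) ^ (n + 1))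
      = π ^ 2 * ((m : ℝ) + n + 1) ^ 2 *
            ((gegenbauer (n + 1) m).eval (Real.cos (π * x)) * (Real.sin (π * x)) ^ (n + 1)) := by
  obtain ⟨j, rfl⟩ := Nat.exists_eq_add_of_le' hn
  intro x hx
  have hν : ((j + 1 : ℕ) : ℝ) + 1 = (j : ℝ) + 2 := by push_cast; ring
  have hs : sin (π * x) ≠ 0 :=
    (sin_pos_of_pos_of_lt_pi (by nlinarith [pi_pos, hx.1]) (by nlinarith [pi_pos, hx.2])).ne'
  set P := gegenbauer ((j : ℝ) + 2) m
  rw [hν, deriv_deriv_comp_mul_left π (fun θ => P.eval (cos θ) * sin θ ^ (j + 2)),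
    deriv_deriv_eval_cos_mul_sin_pow, sinPowDeriv_sinPowDeriv_gegenbauer]
  simp only [eval_sub, eval_mul, eval_C, eval_X, eval_pow, eval_one, smul_eq_mul]
  field_simp
  push_cast
  linear_combination -(((m : ℝ) + j + 2) ^ 2 * P.eval (cos (π * x)) *
    sin (π * x) ^ 2 * sin (π * x) ^ j) * sin_sq_add_cos_sq (π * x)
end

section
/- Let f : ℝ → ℂ be a nonzero solution of -f'' + V·f = E·f with f(x+1) = C·f(x) for all x and some C ∈ ℂ with |C| ≠ 1. If V is continuous on ℝ, then f is not square-integrable on ℝ (indeed ∫_ℝ |f|² = ∞). -/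
/-!
Since `|f(x+1)|² = |C|²·|f(x)|²`, the function `|f|²` is monotone along unit shifts, increasing
if `|C| ≥ 1` and decreasing if `|C| ≤ 1`. In the first case every interval `(a+n, a+n+1]`,
`n ∈ ℕ`, carries at least the mass of `(a, a+1]`, which is positive for `a` close to a point where
the continuous function `f` does not vanish; so the total mass is infinite. The second case is
the first one for `x ↦ f(-x)`.
-/

open MeasureTheory Set Topology Function
open scoped ENNReal

theorem setLIntegral_ne_zero_of_continuous {X : Type*} [TopologicalSpace X] [MeasurableSpace X]
    [OpensMeasurableSpace X] {μ : Measure X} [μ.IsOpenPosMeasure] {F : X → ℝ≥0∞}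
    (hF : Continuous F) {s : Set X} {t : X} (hs : s ∈ 𝓝 t) (ht : F t ≠ 0) :
    ∫⁻ x in s, F x ∂μ ≠ 0 := by
  rw [← pos_iff_ne_zero, setLIntegral_pos_iff hF.measurable]
  have hopen : IsOpen (support F ∩ interior s) :=
    (isOpen_ne_fun hF continuous_const).inter isOpen_interior
  calc 0 < μ (support F ∩ interior s) :=
        hopen.measure_pos μ ⟨t, ht, mem_interior_iff_mem_nhds.2 hs⟩
    _ ≤ μ (support F ∩ s) := by gcongr; exact interior_subset

theorem setLIntegral_Ioc_le_setLIntegral_Ioc_add_nat {F : ℝ → ℝ≥0∞}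
    (hF : ∀ x, F x ≤ F (x + 1)) (a b : ℝ) (n : ℕ) :
    ∫⁻ x in Ioc a b, F x ≤ ∫⁻ x in Ioc (a + n) (b + n), F x := by
  have hshift : ∀ x, F x ≤ F (x + n) := fun x =>
    monotone_nat_of_le_succ (f := fun k : ℕ => F (x + k))
      (fun k => by simpa [add_assoc] using hF (x + k)) (Nat.zero_le n) |>.trans_eq' (by simp)
  calc ∫⁻ x in Ioc a b, F x ≤ ∫⁻ x in Ioc a b, F (x + n) := lintegral_mono fun x => hshift x
    _ = ∫⁻ x in Ioc (a + n) (b + n), F x := by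
      rw [(measurePreserving_add_right volume (n : ℝ)).setLIntegral_comp_emb
        (measurableEmbedding_addRight _), image_add_const_Ioc]

theorem lintegral_eq_top_of_le_comp_add_one {F : ℝ → ℝ≥0∞} (hF : ∀ x, F x ≤ F (x + 1))
    {a : ℝ} (ha : ∫⁻ x in Ioc a (a + 1), F x ≠ 0) : ∫⁻ x, F x = ∞ := by
  have hdisj : Pairwise (Disjoint on fun n : ℕ => Ioc (a + n) (a + n + 1)) := fun m n hmn => by
    simpa using pairwise_disjoint_Ioc_add_intCast a (Int.ofNat_injective.ne hmn)
  refine eq_top_mono (setLIntegral_le_lintegral (⋃ n : ℕ, Ioc (a + n) (a + n + 1)) F) ?_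
  rw [lintegral_iUnion (fun _ => measurableSet_Ioc) hdisj]
  refine eq_top_mono (ENNReal.tsum_le_tsum fun n => ?_) (ENNReal.tsum_const_eq_top_of_ne_zero ha)
  simpa [add_right_comm] using setLIntegral_Ioc_le_setLIntegral_Ioc_add_nat hF a (a + 1) n

theorem Continuous.lintegral_eq_top_of_le_comp_add_one {F : ℝ → ℝ≥0∞} (hF : Continuous F)
    (hmono : ∀ x, F x ≤ F (x + 1)) {t : ℝ} (ht : F t ≠ 0) : ∫⁻ x, F x = ∞ :=
  _root_.lintegral_eq_top_of_le_comp_add_one hmono (a := t - 1 / 2) <|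
    setLIntegral_ne_zero_of_continuous hF (Ioc_mem_nhds (by linarith) (by linarith)) ht

theorem Continuous.lintegral_eq_top_of_comp_add_one_le {F : ℝ → ℝ≥0∞} (hF : Continuous F)
    (hanti : ∀ x, F (x + 1) ≤ F x) {t : ℝ} (ht : F t ≠ 0) : ∫⁻ x, F x = ∞ := by
  rw [← lintegral_neg_eq_self]
  refine (hF.comp continuous_neg).lintegral_eq_top_of_le_comp_add_one (t := -t)
    (fun x => ?_) (by simpa using ht)
  simpa [neg_add_eq_sub] using hanti (-x - 1)

theorem quasiperiodic_not_square_integrable_general (C : ℂ) (f : ℝ → ℂ)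
    (hf : Differentiable ℝ f)
    (hfne : ∃ x, f x ≠ 0)
    (hqper : ∀ x, f (x + 1) = C * f x) :
    (∫⁻ x : ℝ, ‖f x‖₊ ^ 2) = ⊤ := by
  set F : ℝ → ℝ≥0∞ := fun x => (‖f x‖₊ : ℝ≥0∞) ^ 2
  have hF : Continuous F :=
    (ENNReal.continuous_pow 2).comp (ENNReal.continuous_coe.comp hf.continuous.nnnorm)
  have hF_add_one : ∀ x, F (x + 1) = (‖C‖₊ : ℝ≥0∞) ^ 2 * F x := fun x => by
    simp only [F, hqper, nnnorm_mul, ENNReal.coe_mul, mul_pow]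
  obtain ⟨t, ht⟩ := hfne
  have hFt : F t ≠ 0 := by simpa [F] using ht
  rcases le_total 1 ‖C‖₊ with hC | hC
  · refine hF.lintegral_eq_top_of_le_comp_add_one (fun x => ?_) hFt
    rw [hF_add_one]
    exact le_mul_of_one_le_left' (one_le_pow₀ (by exact_mod_cast hC))
  · refine hF.lintegral_eq_top_of_comp_add_one_le (fun x => ?_) hFt
    rw [hF_add_one]
    exact mul_le_of_le_one_left' (pow_le_one₀ bot_le (by exact_mod_cast hC))

/-- A nonzero solution of `-f'' + V·f = E·f` with quasi-periodicity `f(x+1) = C·f(x)`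
and `|C| ≠ 1` is not square-integrable on `ℝ`: the integral of `|f|²` over `ℝ` is
infinite. -/
theorem quasiperiodic_not_square_integrable (V : ℝ → ℂ) (E C : ℂ) (f : ℝ → ℂ)
    (hV : Continuous V) (hVper : ∀ x, V (x + 1) = V x)
    (hC : ‖C‖ ≠ 1)
    (hf : Differentiable ℝ f) (hf' : Differentiable ℝ (deriv f))
    (hfeq : ∀ x, -(deriv (deriv f) x) + V x * f x = E * f x)
    (hfne : ∃ x, f x ≠ 0)
    (hqper : ∀ x, f (x + 1) = C * f x) :
    (∫⁻ x : ℝ, ‖f x‖₊ ^ 2) = ⊤ :=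
  quasiperiodic_not_square_integrable_general C f hf hfne hqper
end
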